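/- (Perron) A real symmetric matrix with all entries strictly positive has a largest eigenvalue whose corresponding eigenvector can be chosen with all entries strictly positive. -/

import Mathlib

open Matrix Metric ContinuousLinearMap WithLp

/-!
The largest eigenvalue of a symmetric matrix `R` is the maximum of the quadratic form
`x ⬝ᵥ R *ᵥ x` on the unit sphere, and any maximiser is an eigenvector for it. When the entries
of `R` are positive, replacing a maximiser `x` by `|x|` does not decrease the form, so there is a
nonnegative maximiser `v`; then `R *ᵥ v` has all entries positive, which forces both the
eigenvalue and all entries of `v = λ⁻¹ • R *ᵥ v` to be positive.
-/

section Rayleigh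

variable {E : Type*} [NormedAddCommGroup E] [InnerProductSpace ℝ E] {T : E →L[ℝ] E}

theorem IsSelfAdjoint.apply_eq_smul_of_isMaxOn_unitSphere [CompleteSpace E]
    (hT : IsSelfAdjoint T) {x₀ : E} (hx₀ : ‖x₀‖ = 1)
    (hmax : IsMaxOn T.reApplyInnerSelf (sphere 0 1) x₀) :
    T x₀ = T.reApplyInnerSelf x₀ • x₀ := by
  have := hT.eq_smul_self_of_isLocalExtrOn_real (x₀ := x₀) (hx₀ ▸ Or.inr hmax.localize)
  simpa [rayleighQuotient, hx₀] using this

theorem ContinuousLinearMap.eigenvalue_le_of_isMaxOn_unitSphere {x₀ w : E} {μ : ℝ}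
    (hmax : IsMaxOn T.reApplyInnerSelf (sphere 0 1) x₀) (hw : w ≠ 0) (hTw : T w = μ • w) :
    μ ≤ T.reApplyInnerSelf x₀ := by
  have hw' : ‖w‖ ≠ 0 := norm_ne_zero_iff.mpr hw
  calc μ = T.reApplyInnerSelf (‖w‖⁻¹ • w) := by
        rw [reApplyInnerSelf_smul, reApplyInnerSelf_apply, hTw, real_inner_smul_left,
          real_inner_self_eq_norm_sq, RCLike.re_to_real, Real.norm_eq_abs, abs_inv, abs_norm]
        field_simp
    _ ≤ T.reApplyInnerSelf x₀ := hmax (by simp [norm_smul, hw'])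

end Rayleigh

namespace Matrix

variable {ι : Type*} [Fintype ι]

theorem dotProduct_mulVec_self_le_abs {R : Matrix ι ι ℝ} (hR : ∀ i j, 0 ≤ R i j) (x : ι → ℝ) :
    x ⬝ᵥ R *ᵥ x ≤ |x| ⬝ᵥ R *ᵥ |x| := by
  simp only [dotProduct, mulVec, Finset.mul_sum, Pi.abs_apply]
  refine Finset.sum_le_sum fun i _ => Finset.sum_le_sum fun j _ => ?_
  calc x i * (R i j * x j) ≤ |x i * (R i j * x j)| := le_abs_self _
    _ = |x i| * (R i j * |x j|) := by rw [abs_mul, abs_mul, abs_of_nonneg (hR i j)]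

theorem pos_of_mulVec_eq_smul {R : Matrix ι ι ℝ} (hR : ∀ i j, 0 < R i j) {v : ι → ℝ} {lam : ℝ}
    (hv : 0 ≤ v) (hv₀ : v ≠ 0) (hRv : R *ᵥ v = lam • v) : 0 < lam ∧ ∀ i, 0 < v i := by
  obtain ⟨k, hk⟩ := Function.ne_iff.mp hv₀
  have hvk : 0 < v k := (hv k).lt_of_ne' hk
  have hRv_pos (i : ι) : 0 < lam * v i := by
    rw [← smul_eq_mul, ← Pi.smul_apply, ← hRv, mulVec, dotProduct]
    exact Finset.sum_pos' (fun j _ => mul_nonneg (hR i j).le (hv j))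
      ⟨k, Finset.mem_univ k, mul_pos (hR i k) hvk⟩
  have hlam : 0 < lam := pos_of_mul_pos_left (hRv_pos k) hvk.le
  exact ⟨hlam, fun i => pos_of_mul_pos_right (hRv_pos i) hlam.le⟩

variable [DecidableEq ι]

theorem reApplyInnerSelf_toEuclideanCLM (R : Matrix ι ι ℝ) (x : EuclideanSpace ℝ ι) :
    (toEuclideanCLM (𝕜 := ℝ) R).reApplyInnerSelf x = x.ofLp ⬝ᵥ R *ᵥ x.ofLp := by
  rw [reApplyInnerSelf_apply, RCLike.re_to_real, real_inner_comm, inner_toEuclideanCLM]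

theorem exists_nonneg_isMaxOn_unitSphere [Nonempty ι] {R : Matrix ι ι ℝ} (hR : ∀ i j, 0 ≤ R i j) :
    ∃ x ∈ sphere (0 : EuclideanSpace ℝ ι) 1, 0 ≤ x.ofLp ∧
      IsMaxOn (toEuclideanCLM (𝕜 := ℝ) R).reApplyInnerSelf
        (sphere (0 : EuclideanSpace ℝ ι) 1) x := by
  set T := toEuclideanCLM (𝕜 := ℝ) R
  obtain ⟨x, hx, hmax⟩ := (isCompact_sphere (0 : EuclideanSpace ℝ ι) 1).exists_isMaxOn
    (NormedSpace.sphere_nonempty.mpr zero_le_one) T.reApplyInnerSelf_continuous.continuousOn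
  have hx_abs : toLp 2 |x.ofLp| ∈ sphere (0 : EuclideanSpace ℝ ι) 1 := by
    simpa [EuclideanSpace.norm_eq] using hx
  have hle : T.reApplyInnerSelf x ≤ T.reApplyInnerSelf (toLp 2 |x.ofLp|) := by
    simpa only [T, reApplyInnerSelf_toEuclideanCLM] using dotProduct_mulVec_self_le_abs hR x.ofLp
  exact ⟨toLp 2 |x.ofLp|, hx_abs, abs_nonneg _, fun y hy => show _ ≤ _ from (hmax hy).trans hle⟩

end Matrix

/-- (Perron) A real symmetric matrix with all entries strictly positive has a largest
eigenvalue `λ > 0` whose eigenvector can be chosen with all entries strictly positive. -/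
theorem perron_symmetric_positive_matrix {n : ℕ} (hn : 0 < n)
    (R : Matrix (Fin n) (Fin n) ℝ) (hRsymm : R.IsSymm) (hRpos : ∀ i j, 0 < R i j) :
    ∃ lam : ℝ, 0 < lam ∧ ∃ v : Fin n → ℝ, (∀ i, 0 < v i) ∧ R.mulVec v = lam • v ∧
      ∀ (μ : ℝ) (w : Fin n → ℝ), w ≠ 0 → R.mulVec w = μ • w → μ ≤ lam := by
  have : Nonempty (Fin n) := ⟨⟨0, hn⟩⟩
  set T := toEuclideanCLM (𝕜 := ℝ) R
  have hT : IsSelfAdjoint T := (isHermitian_iff_isSelfAdjoint.mp hRsymm).map _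
  obtain ⟨x, hx, hx_nonneg, hmax⟩ := exists_nonneg_isMaxOn_unitSphere fun i j => (hRpos i j).le
  have hx_ne : x.ofLp ≠ 0 := by simpa using ne_zero_of_mem_unit_sphere ⟨x, hx⟩
  have hRx : R *ᵥ x.ofLp = T.reApplyInnerSelf x • x.ofLp :=
    congrArg ofLp (hT.apply_eq_smul_of_isMaxOn_unitSphere (mem_sphere_zero_iff_norm.mp hx) hmax)
  obtain ⟨hlam, hx_pos⟩ := pos_of_mulVec_eq_smul hRpos hx_nonneg hx_ne hRx
  refine ⟨_, hlam, x.ofLp, hx_pos, hRx, fun μ w hw hRw => ?_⟩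
  exact T.eigenvalue_le_of_isMaxOn_unitSphere (w := toLp 2 w) hmax (by simpa using hw)
    (congrArg (toLp 2) hRw)
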